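/- Let M_{b|y} (b ∈ {+1,−1}, y ∈ {0,1}) be positive semidefinite operators on ℂ² with M_{+1|y} + M_{−1|y} ⪯ I for each y, and set B_y = M_{+1|y} − M_{−1|y}. Then for every θ− ∈ (0, π/2): (1/2)[Tr(Z·B0) + Tr(Z·B1) − sin(θ−)·Tr(X·B0) + sin(θ−)·Tr(X·B1) + cos(θ−)·Tr(B0 + B1)] ≤ 2·√(1 + sin²(θ−)). -/

import Mathlib

/-!
Write `s = sin θ`, `c = cos θ`, `L = √(1 + s²)` and `C_y = c I + (-1)^(y+1) s X + Z`, so that the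
functional is `½ ∑_y Re Tr(C_y B_y)`. The operator `D_y = L I + (c/L)((-1)^(y+1) s X + Z)` is a dual
certificate: `D_y ⪰ 0` and `D_y ∓ C_y ⪰ 0` (both are rank one), hence
`Tr(C_y B_y) = Tr D_y - Tr((D_y - C_y) M₊) - Tr((D_y + C_y) M₋) - Tr(D_y (I - M₊ - M₋)) ≤ Tr D_y = 2L`,
each subtracted trace being that of a product of two positive semidefinite matrices.
-/

open Matrix ComplexOrder

namespace Matrix

open scoped MatrixOrder

variable {n 𝕜 : Type*} [Fintype n] [RCLike 𝕜]

lemma PosSemidef.trace_mul_nonneg {A B : Matrix n n 𝕜} (hA : A.PosSemidef) (hB : B.PosSemidef) :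
    0 ≤ (A * B).trace := by
  classical
  obtain ⟨X, rfl⟩ := CStarAlgebra.nonneg_iff_eq_star_mul_self.mp hA.nonneg
  rw [star_eq_conjTranspose, Matrix.mul_assoc, trace_mul_comm]
  exact (hB.mul_mul_conjTranspose_same X).trace_nonneg

theorem trace_mul_sub_le_trace [DecidableEq n] {C D P Q : Matrix n n 𝕜}
    (hD : D.PosSemidef) (hDC : (D - C).PosSemidef) (hDC' : (D + C).PosSemidef)
    (hP : P.PosSemidef) (hQ : Q.PosSemidef) (hPQ : (1 - (P + Q)).PosSemidef) :
    (C * (P - Q)).trace ≤ D.trace := by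
  have hsplit : D.trace - (C * (P - Q)).trace =
      ((D - C) * P).trace + ((D + C) * Q).trace + (D * (1 - (P + Q))).trace := by
    simp only [Matrix.sub_mul, Matrix.add_mul, Matrix.mul_sub, Matrix.mul_add, Matrix.mul_one,
      trace_sub, trace_add]
    ring
  have hnonneg := add_nonneg
    (add_nonneg (hDC.trace_mul_nonneg hP) (hDC'.trace_mul_nonneg hQ)) (hD.trace_mul_nonneg hPQ)
  rw [← hsplit] at hnonneg
  exact sub_nonneg.mp hnonneg

end Matrix

lemma quadratic_form_nonneg {p q w : ℝ} (hp : 0 ≤ p) (hw : 0 ≤ w) (hq : q ^ 2 ≤ p * w)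
    (α β : ℝ) : 0 ≤ p * α ^ 2 + 2 * q * α * β + w * β ^ 2 := by
  rcases hp.eq_or_lt with rfl | hp
  · obtain rfl : q = 0 := by nlinarith
    nlinarith [mul_nonneg hw (sq_nonneg β)]
  · nlinarith [sq_nonneg (p * α + q * β), mul_nonneg (sub_nonneg.2 hq) (sq_nonneg β)]

local notation "σX" => (!![0, 1; 1, 0] : Matrix (Fin 2) (Fin 2) ℂ)
local notation "σZ" => (!![1, 0; 0, -1] : Matrix (Fin 2) (Fin 2) ℂ)

def pauliCombo (a x z : ℝ) : Matrix (Fin 2) (Fin 2) ℂ :=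
  (a : ℂ) • 1 + (x : ℂ) • σX + (z : ℂ) • σZ

lemma pauliCombo_eq (a x z : ℝ) :
    pauliCombo a x z = !![((a + z : ℝ) : ℂ), x; x, ((a - z : ℝ) : ℂ)] := by
  ext i j
  fin_cases i <;> fin_cases j <;> simp [pauliCombo, sub_eq_add_neg]

lemma pauliCombo_add (a x z a' x' z' : ℝ) :
    pauliCombo a x z + pauliCombo a' x' z' = pauliCombo (a + a') (x + x') (z + z') := by
  simp only [pauliCombo, Complex.ofReal_add, add_smul]
  abel

lemma pauliCombo_sub (a x z a' x' z' : ℝ) :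
    pauliCombo a x z - pauliCombo a' x' z' = pauliCombo (a - a') (x - x') (z - z') := by
  simp only [pauliCombo, Complex.ofReal_sub, sub_smul]
  abel

lemma trace_pauliCombo_mul (a x z : ℝ) (P : Matrix (Fin 2) (Fin 2) ℂ) :
    (pauliCombo a x z * P).trace = a * P.trace + x * (σX * P).trace + z * (σZ * P).trace := by
  simp only [pauliCombo, Matrix.add_mul, Matrix.smul_mul, Matrix.one_mul, trace_add, trace_smul,
    smul_eq_mul]

lemma trace_pauliCombo (a x z : ℝ) : (pauliCombo a x z).trace = 2 * a := by
  simpa [mul_comm] using trace_pauliCombo_mul a x z 1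

lemma posSemidef_pauliCombo {a x z : ℝ} (ha : 0 ≤ a) (h : x ^ 2 + z ^ 2 ≤ a ^ 2) :
    (pauliCombo a x z).PosSemidef := by
  rw [pauliCombo_eq, posSemidef_iff_dotProduct_mulVec]
  refine ⟨?_, fun v => ?_⟩
  · ext i j
    fin_cases i <;> fin_cases j <;> simp
  · have hp : 0 ≤ a + z := by nlinarith
    have hw : 0 ≤ a - z := by nlinarith
    have hq : x ^ 2 ≤ (a + z) * (a - z) := by nlinarith
    have hre := quadratic_form_nonneg hp hw hq (v 0).re (v 1).re
    have him := quadratic_form_nonneg hp hw hq (v 0).im (v 1).im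
    simp only [dotProduct, mulVec, Fin.sum_univ_two, Pi.star_apply, RCLike.star_def, of_apply,
      cons_val', cons_val_zero, cons_val_one, empty_val', cons_val_fin_one]
    rw [Complex.le_def]
    simp only [Complex.zero_re, Complex.zero_im, Complex.add_re, Complex.add_im, Complex.mul_re,
      Complex.mul_im, Complex.conj_re, Complex.conj_im, Complex.ofReal_re, Complex.ofReal_im]
    constructor
    · nlinarith
    · ring

theorem re_trace_pauliCombo_mul_sub_le {c : ℝ} (hc : |c| ≤ 1) (x : ℝ)
    {P Q : Matrix (Fin 2) (Fin 2) ℂ} (hP : P.PosSemidef) (hQ : Q.PosSemidef)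
    (hPQ : (1 - (P + Q)).PosSemidef) :
    (pauliCombo c x 1 * (P - Q)).trace.re ≤ 2 * √(1 + x ^ 2) := by
  set L := √(1 + x ^ 2)
  have hL : L ^ 2 = 1 + x ^ 2 := Real.sq_sqrt (by positivity)
  have hL1 : 1 ≤ L := Real.one_le_sqrt.mpr (by nlinarith)
  obtain ⟨hc₁, hc₂⟩ := abs_le.mp hc
  have hD : (pauliCombo L (c * x / L) (c / L)).PosSemidef := by
    refine posSemidef_pauliCombo (by linarith) ?_
    rw [div_pow, div_pow, ← add_div, div_le_iff₀ (by positivity)]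
    have hcL : c ^ 2 ≤ L ^ 2 := by nlinarith
    nlinarith [mul_le_mul_of_nonneg_left hcL (sq_nonneg L)]
  have hDC : (pauliCombo L (c * x / L) (c / L) - pauliCombo c x 1).PosSemidef := by
    rw [pauliCombo_sub]
    refine posSemidef_pauliCombo (by linarith) (le_of_eq ?_)
    field_simp
    linear_combination -(L - c) ^ 2 * hL
  have hDC' : (pauliCombo L (c * x / L) (c / L) + pauliCombo c x 1).PosSemidef := by
    rw [pauliCombo_add]
    refine posSemidef_pauliCombo (by linarith) (le_of_eq ?_)
    field_simp
    linear_combination -(L + c) ^ 2 * hL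
  have h := (Complex.le_def.mp (trace_mul_sub_le_trace hD hDC hDC' hP hQ hPQ)).1
  simpa [trace_pauliCombo] using h

theorem stmt13_general (M : Bool → Fin 2 → Matrix (Fin 2) (Fin 2) ℂ)
    (hpos : ∀ b y, (M b y).PosSemidef)
    (hsub : ∀ y, ((1 : Matrix (Fin 2) (Fin 2) ℂ) - (M true y + M false y)).PosSemidef)
    (θ : ℝ) :
    (1 / 2 : ℝ) *
      (((!![1, 0; 0, -1] : Matrix (Fin 2) (Fin 2) ℂ) * (M true 0 - M false 0)).trace +
       ((!![1, 0; 0, -1] : Matrix (Fin 2) (Fin 2) ℂ) * (M true 1 - M false 1)).trace -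
       (Real.sin θ : ℂ) *
         ((!![0, 1; 1, 0] : Matrix (Fin 2) (Fin 2) ℂ) * (M true 0 - M false 0)).trace +
       (Real.sin θ : ℂ) *
         ((!![0, 1; 1, 0] : Matrix (Fin 2) (Fin 2) ℂ) * (M true 1 - M false 1)).trace +
       (Real.cos θ : ℂ) *
         ((M true 0 - M false 0) + (M true 1 - M false 1)).trace).re
      ≤ 2 * Real.sqrt (1 + Real.sin θ ^ 2) := by
  have hc : |Real.cos θ| ≤ 1 := Real.abs_cos_le_one θ
  have h₀ := re_trace_pauliCombo_mul_sub_le hc (-Real.sin θ) (hpos true 0) (hpos false 0) (hsub 0)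
  have h₁ := re_trace_pauliCombo_mul_sub_le hc (Real.sin θ) (hpos true 1) (hpos false 1) (hsub 1)
  rw [neg_sq] at h₀
  rw [trace_pauliCombo_mul] at h₀ h₁
  simp only [trace_add, Complex.add_re, Complex.sub_re, Complex.mul_re, Complex.ofReal_re,
    Complex.ofReal_im, Complex.ofReal_neg, Complex.neg_re, Complex.neg_im, Complex.ofReal_one,
    Complex.one_re, Complex.one_im] at h₀ h₁ ⊢
  linarith

/-- General quantum bound without joint measurability: for (possibly lossy)
binary qubit measurements `M_{±|y}` with `M_{+|y} + M_{−|y} ⪯ I` and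
`B_y = M_{+|y} − M_{−|y}`, the same linear functional is at most
`2√(1 + sin²θ−)` for all `θ− ∈ (0, π/2)`. -/
theorem stmt13 (M : Bool → Fin 2 → Matrix (Fin 2) (Fin 2) ℂ)
    (hpos : ∀ b y, (M b y).PosSemidef)
    (hsub : ∀ y, ((1 : Matrix (Fin 2) (Fin 2) ℂ) - (M true y + M false y)).PosSemidef)
    (θ : ℝ) (hθ : θ ∈ Set.Ioo 0 (Real.pi / 2)) :
    (1 / 2 : ℝ) *
      (((!![1, 0; 0, -1] : Matrix (Fin 2) (Fin 2) ℂ) * (M true 0 - M false 0)).trace +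
       ((!![1, 0; 0, -1] : Matrix (Fin 2) (Fin 2) ℂ) * (M true 1 - M false 1)).trace -
       (Real.sin θ : ℂ) *
         ((!![0, 1; 1, 0] : Matrix (Fin 2) (Fin 2) ℂ) * (M true 0 - M false 0)).trace +
       (Real.sin θ : ℂ) *
         ((!![0, 1; 1, 0] : Matrix (Fin 2) (Fin 2) ℂ) * (M true 1 - M false 1)).trace +
       (Real.cos θ : ℂ) *
         ((M true 0 - M false 0) + (M true 1 - M false 1)).trace).re
      ≤ 2 * Real.sqrt (1 + Real.sin θ ^ 2) :=
  stmt13_general M hpos hsub θ
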